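/- A dimaze (D, B_0) satisfies the property that the maximal linkable sets are exactly the sets linkable onto B_0 if and only if its converted bimaze (D, B_0)^⋆ satisfies the property that the maximal m_0-matchable sets are exactly the sets m_0-matchable onto (V \ B_0)^⋆. -/

import Mathlib

open Set


/-- A finite directed path/walk or a ray, encoded by a vertex function and a length:
the number of edges, `⊤` for a ray. Only indices `≤ len` are meaningful. -/
structure DiWalk (V : Type*) where
  vtx : ℕ → V
  len : ℕ∞

namespace DiWalk

variable {V : Type*} (w : DiWalk V)

/-- The vertices of the walk. -/
def support : Set V := {v | ∃ i : ℕ, (i : ℕ∞) ≤ w.len ∧ w.vtx i = v}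

/-- The directed edges of the walk. -/
def edges : Set (V × V) := {e | ∃ i : ℕ, (i : ℕ∞) + 1 ≤ w.len ∧ e = (w.vtx i, w.vtx (i + 1))}

/-- The initial vertex. -/
def Ini : V := w.vtx 0

/-- The terminal vertex (meaningful for finite walks). -/
def Ter : V := w.vtx w.len.toNat

/-- `w` is a ray, i.e. one-way infinite. -/
def IsRay : Prop := w.len = ⊤

/-- `w` is a (finite) directed path or a directed ray in the digraph `D`: consecutive
vertices are joined by edges of `D` and no vertex is repeated. -/
def IsPathIn (D : V → V → Prop) : Prop :=
  (∀ i : ℕ, (i : ℕ∞) + 1 ≤ w.len → D (w.vtx i) (w.vtx (i + 1))) ∧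
  (∀ i j : ℕ, (i : ℕ∞) ≤ w.len → (j : ℕ∞) ≤ w.len → w.vtx i = w.vtx j → i = j)

end DiWalk

variable {V : Type*}

/-- The vertex set of a family of walks. -/
def VSet (Q : Set (DiWalk V)) : Set V := ⋃ q ∈ Q, q.support

/-- The edge set of a family of walks. -/
def ESet (Q : Set (DiWalk V)) : Set (V × V) := ⋃ q ∈ Q, q.edges

/-- The set of initial vertices of a family of walks. -/
def IniSet (Q : Set (DiWalk V)) : Set V := DiWalk.Ini '' Q

/-- The set of terminal vertices of the finite members of a family of walks. -/
def TerSet (Q : Set (DiWalk V)) : Set V := {v | ∃ q ∈ Q, ¬ q.IsRay ∧ q.Ter = v}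

/-- The members of `Q` are pairwise vertex-disjoint. -/
def PairwiseDisjointWalks (Q : Set (DiWalk V)) : Prop :=
  ∀ p ∈ Q, ∀ q ∈ Q, p ≠ q → Disjoint p.support q.support

/-- `Q` is a set of pairwise disjoint directed paths or rays in `D`. -/
def IsPathSystem (D : V → V → Prop) (Q : Set (DiWalk V)) : Prop :=
  (∀ q ∈ Q, q.IsPathIn D) ∧ PairwiseDisjointWalks Q

/-- A linkage in the dimaze `(D, B0)`: a set of pairwise disjoint finite directed paths
ending in `B0`. -/
def IsLinkage (D : V → V → Prop) (B0 : Set V) (Q : Set (DiWalk V)) : Prop :=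
  IsPathSystem D Q ∧ ∀ q ∈ Q, ¬ q.IsRay ∧ q.Ter ∈ B0

/-- `I` is linkable to `B0` in `(D, B0)`. -/
def Linkable (D : V → V → Prop) (B0 : Set V) (I : Set V) : Prop :=
  ∃ Q, IsLinkage D B0 Q ∧ IniSet Q = I

/-- `I` is linkable onto `B0`: some linkage from `I` has terminal vertex set exactly `B0`. -/
def LinkableOnto (D : V → V → Prop) (B0 : Set V) (I : Set V) : Prop :=
  ∃ Q, IsLinkage D B0 Q ∧ IniSet Q = I ∧ TerSet Q = B0

/-- `B0` is a set of sinks of `D`. -/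
def IsDimaze (D : V → V → Prop) (B0 : Set V) : Prop := ∀ b ∈ B0, ∀ v, ¬ D b v

/-- `v` is the centre of a linking fan: infinitely many non-trivial directed paths to `B0`
from `v`, pairwise meeting only in `v`. -/
def IsFanCentre (D : V → V → Prop) (B0 : Set V) (v : V) : Prop :=
  ∃ P : Set (DiWalk V), P.Infinite ∧
    (∀ p ∈ P, p.IsPathIn D ∧ ¬ p.IsRay ∧ 1 ≤ p.len ∧ p.Ini = v ∧ p.Ter ∈ B0) ∧
    (∀ p ∈ P, ∀ q ∈ P, p ≠ q → p.support ∩ q.support ⊆ {v})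

/-- The ray `R` is the spine of an outgoing comb with teeth ending in `B0`: there are
infinitely many pairwise disjoint non-trivial paths from distinct vertices of `R` to `B0`,
each meeting `R` exactly in its initial vertex. -/
def IsSpine (D : V → V → Prop) (B0 : Set V) (R : DiWalk V) : Prop :=
  R.IsPathIn D ∧ R.IsRay ∧
  ∃ P : Set (DiWalk V), P.Infinite ∧
    (∀ p ∈ P, p.IsPathIn D ∧ ¬ p.IsRay ∧ 1 ≤ p.len ∧ p.Ini ∈ R.support ∧ p.Ter ∈ B0 ∧
      p.support ∩ R.support = {p.Ini}) ∧
    PairwiseDisjointWalks P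

/-- `(D, B0)` contains no subdivision of an outgoing comb. -/
def COFree (D : V → V → Prop) (B0 : Set V) : Prop := ¬ ∃ R, IsSpine D B0 R

/-- `(D, B0)` contains no subdivision of a linking fan. -/
def FanFree (D : V → V → Prop) (B0 : Set V) : Prop := ¬ ∃ v, IsFanCentre D B0 v

/-- A topological path in `(D, B0)`. -/
def IsTopPath (D : V → V → Prop) (B0 : Set V) (w : DiWalk V) : Prop :=
  w.IsPathIn D ∧
    ((¬ w.IsRay ∧ w.Ter ∈ B0) ∨ (¬ w.IsRay ∧ IsFanCentre D B0 w.Ter) ∨ IsSpine D B0 w)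

/-- `I` is topologically linkable in `(D, B0)`. -/
def TopLinkable (D : V → V → Prop) (B0 : Set V) (I : Set V) : Prop :=
  ∃ Q : Set (DiWalk V), (∀ q ∈ Q, IsTopPath D B0 q) ∧ PairwiseDisjointWalks Q ∧ IniSet Q = I
section Bipartite

variable {V W : Type*}

/-- `m` is a matching in the bipartite graph with edge set `E ⊆ V × W`. -/
def IsBipMatching (E m : Set (V × W)) : Prop :=
  m ⊆ E ∧ ∀ p ∈ m, ∀ q ∈ m, (p.1 = q.1 ∨ p.2 = q.2) → p = q

/-- `I ⊆ V` is matchable in the bipartite graph with edge set `E`. -/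
def Matchable (E : Set (V × W)) (I : Set V) : Prop :=
  ∃ m, IsBipMatching E m ∧ Prod.fst '' m = I

/-- One step along an edge of `F` in the bipartite graph, on vertex type `V ⊕ W`. -/
def bipStep (F : Set (V × W)) : (V ⊕ W) → (V ⊕ W) → Prop := fun a b =>
  match a, b with
  | Sum.inl v, Sum.inr w => (v, w) ∈ F
  | Sum.inr w, Sum.inl v => (v, w) ∈ F
  | _, _ => False

/-- Every connected component of the bipartite graph with edge set `F` is finite. -/
def FiniteComponents (F : Set (V × W)) : Prop :=
  ∀ x : V ⊕ W, {y | Relation.ReflTransGen (bipStep F) x y}.Finite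

/-- `m` is an `m0`-matching: a matching such that every component of `m0 ∪ m` is finite. -/
def IsM0Matching (E m0 m : Set (V × W)) : Prop :=
  IsBipMatching E m ∧ FiniteComponents (m0 ∪ m)

/-- `I` is `m0`-matchable. -/
def M0Matchable (E m0 : Set (V × W)) (I : Set V) : Prop :=
  ∃ m, IsM0Matching E m0 m ∧ Prod.fst '' m = I

/-- `I` is `m0`-matchable onto `W'`. -/
def M0MatchableOnto (E m0 : Set (V × W)) (I : Set V) (W' : Set W) : Prop :=
  ∃ m, IsM0Matching E m0 m ∧ Prod.fst '' m = I ∧ Prod.snd '' m = W'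

end Bipartite

section Star

variable {V : Type*}

/-- The edge set of the converted bimaze of the dimaze `(D, B0)`: the right class is
`{v ∣ v ∉ B0}` (representing `(V \ B0)⋆`) and the edges are the identity matching
together with `v u⋆` for every edge `(u, v)` of `D`. -/
def starEdges (D : V → V → Prop) (B0 : Set V) : Set (V × V) :=
  {p | (p.1 = p.2 ∧ p.2 ∉ B0) ∨ (D p.2 p.1 ∧ p.2 ∉ B0)}

/-- The identity matching of the converted bimaze. -/
def starM0 (B0 : Set V) : Set (V × V) := {p | p.1 = p.2 ∧ p.1 ∉ B0}

end Star

/-- The property `(†)` of a dimaze: the maximal linkable sets are exactly the sets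
linkable onto `B0`. -/
def DaggerProp {V : Type*} (D : V → V → Prop) (B0 : Set V) : Prop :=
  ∀ I, (Linkable D B0 I ∧ ∀ I', Linkable D B0 I' → I ⊆ I' → I = I') ↔ LinkableOnto D B0 I

/-- The property `(‡)` of a bimaze: the maximal `m0`-matchable sets are exactly the sets
`m0`-matchable onto the right class `Wcl`. -/
def DDaggerProp {V W : Type*} (E m0 : Set (V × W)) (Wcl : Set W) : Prop :=
  ∀ I, (M0Matchable E m0 I ∧ ∀ I', M0Matchable E m0 I' → I ⊆ I' → I = I') ↔
    M0MatchableOnto E m0 I Wcl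

/-!
Both properties say that a family of sets is an antichain. Every linkable set lies in a set
linkable onto `B0`, and every `m0`-matchable set lies in a set `m0`-matchable onto
`(V \ B0)⋆` (switch to `m0` along the alternating walks that start at right vertices missed by
the matching). Hence `(†)` says that the sets linkable onto `B0` form an antichain, and `(‡)`
says the same of the sets `m0`-matchable onto `(V \ B0)⋆`. Complementation maps the first family
onto the second: the reversed edges `v u⋆` of a linkage from `I` onto `B0`, together with the
edges `v v⋆` of `m0` at the vertices it avoids, form an `m0`-matching covering exactly `V \ I`;
conversely, following an `m0`-matching onto `(V \ B0)⋆` backwards from the left vertices it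
misses gives a linkage onto `B0`, each walk stopping in `B0` because the components of
`m0 ∪ m` are finite.
-/

open Relation

theorem forall_maximal_iff_iff_isAntichain {α : Type*} [PartialOrder α] {P O : α → Prop}
    (hOP : ∀ x, O x → P x) (hcof : ∀ x, P x → ∃ y, O y ∧ x ≤ y) :
    (∀ x, (P x ∧ ∀ y, P y → x ≤ y → x = y) ↔ O x) ↔ IsAntichain (· ≤ ·) {x | O x} := by
  constructor
  · intro h x hx y hy hne hxy
    exact hne (((h x).2 hx).2 y (hOP y hy) hxy)
  · intro h x
    constructor
    · rintro ⟨hx, hmax⟩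
      obtain ⟨y, hy, hxy⟩ := hcof x hx
      rwa [hmax y (hOP y hy) hxy]
    · intro hx
      refine ⟨hOP x hx, fun y hy hxy => le_antisymm hxy ?_⟩
      obtain ⟨z, hz, hyz⟩ := hcof y hy
      rwa [h.eq hx hz (hxy.trans hyz)]

theorem Set.InjOn.iterate_eq_iterate {α : Type*} {f : α → α} {S : Set α} (hf : InjOn f S)
    {a b : α} (ha : a ∉ f '' S) (hb : b ∉ f '' S) :
    ∀ {i j : ℕ}, (∀ k < i, f^[k] a ∈ S) → (∀ k < j, f^[k] b ∈ S) → f^[i] a = f^[j] b →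
      a = b ∧ i = j
  | 0, 0, _, _, h => ⟨h, rfl⟩
  | 0, j + 1, _, hj, h => by
    rw [Function.iterate_succ_apply'] at h
    exact absurd ⟨_, hj j j.lt_succ_self, h.symm⟩ ha
  | i + 1, 0, hi, _, h => by
    rw [Function.iterate_succ_apply'] at h
    exact absurd ⟨_, hi i i.lt_succ_self, h⟩ hb
  | i + 1, j + 1, hi, hj, h => by
    simp only [Function.iterate_succ_apply'] at h
    obtain ⟨rfl, rfl⟩ := hf.iterate_eq_iterate ha hb (fun k hk => hi k (by omega))
      (fun k hk => hj k (by omega)) (hf (hi i i.lt_succ_self) (hj j j.lt_succ_self) h)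
    exact ⟨rfl, rfl⟩

theorem Set.LeftInvOn.iterate_iterate {α : Type*} {f g : α → α} {T : Set α} (h : LeftInvOn f g T)
    {b : α} {l : ℕ} (hT : ∀ k < l, g^[k] b ∈ T) : ∀ k ≤ l, f^[k] (g^[l] b) = g^[l - k] b
  | 0, _ => rfl
  | k + 1, hk => by
    obtain ⟨n, hn⟩ : ∃ n, l - k = n + 1 := ⟨l - k - 1, by omega⟩
    rw [Function.iterate_succ_apply', h.iterate_iterate hT k (by omega), hn,
      Function.iterate_succ_apply', h (hT n (by omega)), show l - (k + 1) = n by omega]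

theorem Relation.ReflTransGen.iterate {α : Type*} {r : α → α → Prop} {f : α → α} {S : Set α}
    (hr : ∀ x ∈ S, r x (f x)) {a : α} :
    ∀ {n : ℕ}, (∀ k < n, f^[k] a ∈ S) → ReflTransGen r a (f^[n] a)
  | 0, _ => .refl
  | n + 1, hn => by
    rw [Function.iterate_succ_apply']
    exact (ReflTransGen.iterate hr fun k hk => hn k (by omega)).tail (hr _ (hn n n.lt_succ_self))

section BipartiteFacts

variable {W : Type*}

theorem IsBipMatching.union {E m₁ m₂ : Set (V × W)} (h₁ : IsBipMatching E m₁)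
    (h₂ : IsBipMatching E m₂) (hfst : Disjoint (Prod.fst '' m₁) (Prod.fst '' m₂))
    (hsnd : Disjoint (Prod.snd '' m₁) (Prod.snd '' m₂)) : IsBipMatching E (m₁ ∪ m₂) := by
  have cross : ∀ p ∈ m₁, ∀ q ∈ m₂, ¬ (p.1 = q.1 ∨ p.2 = q.2) := by
    rintro p hp q hq (h | h)
    · exact disjoint_left.1 hfst (mem_image_of_mem _ hp) (h ▸ mem_image_of_mem _ hq)
    · exact disjoint_left.1 hsnd (mem_image_of_mem _ hp) (h ▸ mem_image_of_mem _ hq)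
  refine ⟨union_subset h₁.1 h₂.1, ?_⟩
  rintro p (hp | hp) q (hq | hq) h
  · exact h₁.2 p hp q hq h
  · exact absurd h (cross p hp q hq)
  · exact absurd (h.imp Eq.symm Eq.symm) (cross q hq p hp)
  · exact h₂.2 p hp q hq h

theorem IsBipMatching.subset {E m m' : Set (V × W)} (hm : IsBipMatching E m) (h : m' ⊆ m) :
    IsBipMatching E m' :=
  ⟨h.trans hm.1, fun p hp q hq => hm.2 p (h hp) q (h hq)⟩

theorem IsBipMatching.eq_of_fst_eq {E m : Set (V × W)} (hm : IsBipMatching E m) {p q : V × W}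
    (hp : p ∈ m) (hq : q ∈ m) (h : p.1 = q.1) : p = q :=
  hm.2 p hp q hq (.inl h)

theorem IsBipMatching.eq_of_snd_eq {E m : Set (V × W)} (hm : IsBipMatching E m) {p q : V × W}
    (hp : p ∈ m) (hq : q ∈ m) (h : p.2 = q.2) : p = q :=
  hm.2 p hp q hq (.inr h)

theorem bipStep_inl_inr {F : Set (V × W)} {x : V} {y : W} (h : (x, y) ∈ F) :
    bipStep F (.inl x) (.inr y) := h

theorem bipStep_inr_inl {F : Set (V × W)} {x : V} {y : W} (h : (x, y) ∈ F) :
    bipStep F (.inr y) (.inl x) := h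

theorem bipStep_mono {F G : Set (V × W)} (h : F ⊆ G) : bipStep F ≤ bipStep G := by
  rintro (v | w) (v' | w') hs <;> first | exact hs.elim | exact h hs

theorem FiniteComponents.mono {F G : Set (V × W)} (hG : FiniteComponents G) (h : F ⊆ G) :
    FiniteComponents F :=
  fun x => (hG x).subset fun _ hz => ReflTransGen.mono (bipStep_mono h) _ _ hz

theorem FiniteComponents.exists_iterate_notMem {F : Set (V × W)} (hF : FiniteComponents F)
    {f : V → V} {S : Set V} (hf : InjOn f S)
    (hstep : ∀ x ∈ S, ReflTransGen (bipStep F) (.inl x) (.inl (f x))) {a : V}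
    (ha : a ∉ f '' S) : ∃ n, f^[n] a ∉ S := by
  by_contra! hS
  have hinj : Function.Injective fun n => f^[n] a := fun i j h =>
    (hf.iterate_eq_iterate ha ha (fun k _ => hS k) (fun k _ => hS k) h).2
  refine infinite_range_of_injective hinj
    (((hF (.inl a)).preimage Sum.inl_injective.injOn).subset ?_)
  rintro _ ⟨n, rfl⟩
  exact ReflTransGen.lift' (r := fun x y => ReflTransGen (bipStep F) (.inl x) (.inl y)) Sum.inl
    (fun _ _ h => h) _ _ (ReflTransGen.iterate hstep fun k _ => hS k)

end BipartiteFacts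

theorem finiteComponents_of_blocks {F : Set (V × V)} (c : V → Set V) (hmem : ∀ v, v ∈ c v)
    (hfin : ∀ v, (c v).Finite) (hF : ∀ e ∈ F, c e.1 = c e.2) : FiniteComponents F := by
  have hstep : ∀ a b, bipStep F a b → c (Sum.elim id id a) = c (Sum.elim id id b) := by
    rintro (v | w) (v' | w') hs
    exacts [hs.elim, hF _ hs, (hF _ hs).symm, hs.elim]
  intro x
  refine (((hfin (x.elim id id)).image Sum.inl).union ((hfin (x.elim id id)).image Sum.inr)).subset
    fun z (hz : ReflTransGen _ x z) => ?_
  have hz' : c (z.elim id id) = c (x.elim id id) := by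
    induction hz with
    | refl => rfl
    | tail _ hs ih => exact (hstep _ _ hs).symm.trans ih
  rcases z with v | v
  · exact Or.inl ⟨v, hz' ▸ hmem v, rfl⟩
  · exact Or.inr ⟨v, hz' ▸ hmem v, rfl⟩

namespace DiWalk

variable {w : DiWalk V}

theorem vtx_mem_support {i : ℕ} (hi : (i : ℕ∞) ≤ w.len) : w.vtx i ∈ w.support := ⟨i, hi, rfl⟩

theorem Ini_mem_support : w.Ini ∈ w.support := vtx_mem_support (by simp)

theorem Ter_mem_support : w.Ter ∈ w.support := vtx_mem_support (ENat.natCast_toNat_le_self _)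

theorem vtx_eq_Ter {i : ℕ} (hi : (i : ℕ∞) = w.len) : w.vtx i = w.Ter := by
  rw [Ter, ← hi, ENat.toNat_natCast]

theorem support_finite (hw : ¬ w.IsRay) : w.support.Finite := by
  obtain ⟨n, hn⟩ := ENat.ne_top_iff_exists.1 hw
  refine ((finite_Iic n).image w.vtx).subset ?_
  rintro _ ⟨i, hi, rfl⟩
  exact ⟨i, by rw [← hn] at hi; exact_mod_cast hi, rfl⟩

end DiWalk

open DiWalk

variable {D : V → V → Prop} {B0 : Set V} {Q : Set (DiWalk V)}

theorem mem_VSet {v : V} : v ∈ VSet Q ↔ ∃ q ∈ Q, v ∈ q.support := by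
  simp [VSet]

theorem mem_ESet {a b : V} :
    (a, b) ∈ ESet Q ↔ ∃ q ∈ Q, ∃ i : ℕ, (i : ℕ∞) + 1 ≤ q.len ∧ q.vtx i = a ∧ q.vtx (i + 1) = b := by
  simp [ESet, DiWalk.edges, eq_comm]

theorem mem_support_of_mem_ESet {a b : V} (h : (a, b) ∈ ESet Q) :
    ∃ q ∈ Q, a ∈ q.support ∧ b ∈ q.support := by
  obtain ⟨q, hq, i, hi, rfl, rfl⟩ := mem_ESet.1 h
  exact ⟨q, hq, vtx_mem_support (le_self_add.trans hi), vtx_mem_support (by exact_mod_cast hi)⟩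

theorem IniSet_subset_VSet : IniSet Q ⊆ VSet Q := by
  rintro _ ⟨q, hq, rfl⟩
  exact mem_VSet.2 ⟨q, hq, Ini_mem_support⟩

theorem TerSet_subset_VSet : TerSet Q ⊆ VSet Q := by
  rintro _ ⟨q, hq, -, rfl⟩
  exact mem_VSet.2 ⟨q, hq, Ter_mem_support⟩

theorem IsLinkage.TerSet_subset (hQ : IsLinkage D B0 Q) : TerSet Q ⊆ B0 := by
  rintro _ ⟨q, hq, -, rfl⟩
  exact (hQ.2 q hq).2

namespace IsPathSystem

theorem eq_of_vtx_eq (hQ : IsPathSystem D Q) {q q' : DiWalk V} (hq : q ∈ Q) (hq' : q' ∈ Q)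
    {i j : ℕ} (hi : (i : ℕ∞) ≤ q.len) (hj : (j : ℕ∞) ≤ q'.len) (h : q.vtx i = q'.vtx j) :
    q = q' ∧ i = j := by
  obtain rfl : q = q' := by
    by_contra hne
    exact disjoint_left.1 (hQ.2 q hq q' hq' hne) (h ▸ vtx_mem_support hi) (vtx_mem_support hj)
  exact ⟨rfl, (hQ.1 q hq).2 i j hi hj h⟩

theorem adj_of_mem_ESet (hQ : IsPathSystem D Q) {a b : V} (h : (a, b) ∈ ESet Q) : D a b := by
  obtain ⟨q, hq, i, hi, rfl, rfl⟩ := mem_ESet.1 h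
  exact (hQ.1 q hq).1 i hi

theorem eq_of_mem_ESet_left (hQ : IsPathSystem D Q) {a b b' : V} (h : (a, b) ∈ ESet Q)
    (h' : (a, b') ∈ ESet Q) : b = b' := by
  obtain ⟨q, hq, i, hi, rfl, rfl⟩ := mem_ESet.1 h
  obtain ⟨q', hq', j, hj, hij, rfl⟩ := mem_ESet.1 h'
  obtain ⟨rfl, rfl⟩ := hQ.eq_of_vtx_eq hq hq' (le_self_add.trans hi) (le_self_add.trans hj) hij.symm
  rfl

theorem eq_of_mem_ESet_right (hQ : IsPathSystem D Q) {a a' b : V} (h : (a, b) ∈ ESet Q)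
    (h' : (a', b) ∈ ESet Q) : a = a' := by
  obtain ⟨q, hq, i, hi, rfl, rfl⟩ := mem_ESet.1 h
  obtain ⟨q', hq', j, hj, rfl, hij⟩ := mem_ESet.1 h'
  obtain ⟨rfl, hij⟩ := hQ.eq_of_vtx_eq hq hq' (by exact_mod_cast hi) (by exact_mod_cast hj)
    hij.symm
  obtain rfl : i = j := by omega
  rfl

theorem snd_image_ESet (hQ : IsPathSystem D Q) : Prod.snd '' ESet Q = VSet Q \ IniSet Q := by
  ext b
  constructor
  · rintro ⟨⟨a, b⟩, h, rfl⟩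
    obtain ⟨q, hq, i, hi, rfl, rfl⟩ := mem_ESet.1 h
    refine ⟨mem_VSet.2 ⟨q, hq, vtx_mem_support (by exact_mod_cast hi)⟩, ?_⟩
    rintro ⟨q', hq', hini⟩
    exact (i.succ_ne_zero (hQ.eq_of_vtx_eq hq hq' (by exact_mod_cast hi) (by simp) hini.symm).2)
  · rintro ⟨hb, hbI⟩
    obtain ⟨q, hq, i, hi, rfl⟩ := mem_VSet.1 hb
    obtain _ | i := i
    · exact absurd ⟨q, hq, rfl⟩ hbI
    · exact ⟨(q.vtx i, q.vtx (i + 1)), mem_ESet.2 ⟨q, hq, i, by exact_mod_cast hi, rfl, rfl⟩, rfl⟩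

end IsPathSystem

theorem IsLinkage.fst_image_ESet (hDim : IsDimaze D B0) (hQ : IsLinkage D B0 Q) :
    Prod.fst '' ESet Q = VSet Q \ B0 := by
  ext a
  constructor
  · rintro ⟨⟨a, b⟩, h, rfl⟩
    obtain ⟨q, hq, i, hi, rfl, rfl⟩ := mem_ESet.1 h
    exact ⟨mem_VSet.2 ⟨q, hq, vtx_mem_support (le_self_add.trans hi)⟩,
      fun hB => hDim _ hB _ ((hQ.1.1 q hq).1 i hi)⟩
  · rintro ⟨ha, haB⟩
    obtain ⟨q, hq, i, hi, rfl⟩ := mem_VSet.1 ha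
    have hlt : (i : ℕ∞) < q.len :=
      hi.lt_of_ne fun h => haB (vtx_eq_Ter h ▸ (hQ.2 q hq).2)
    exact ⟨(q.vtx i, q.vtx (i + 1)),
      mem_ESet.2 ⟨q, hq, i, Order.add_one_le_of_lt hlt, rfl, rfl⟩, rfl⟩

theorem fst_image_starM0 (S : Set V) : Prod.fst '' starM0 S = Sᶜ := by
  ext v
  exact ⟨by rintro ⟨_, ⟨-, hv⟩, rfl⟩; exact hv, fun hv => ⟨(v, v), ⟨rfl, hv⟩, rfl⟩⟩

theorem snd_image_starM0 (S : Set V) : Prod.snd '' starM0 S = Sᶜ := by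
  ext v
  exact ⟨by rintro ⟨_, ⟨he, hv⟩, rfl⟩; exact he ▸ hv, fun hv => ⟨(v, v), ⟨rfl, hv⟩, rfl⟩⟩

theorem starM0_anti {S T : Set V} (h : S ⊆ T) : starM0 T ⊆ starM0 S :=
  fun _ hp => ⟨hp.1, fun hS => hp.2 (h hS)⟩

theorem starM0_subset_starEdges : starM0 B0 ⊆ starEdges D B0 :=
  fun _ hp => Or.inl ⟨hp.1, hp.1 ▸ hp.2⟩

theorem snd_notMem_of_mem_starEdges {e : V × V} (h : e ∈ starEdges D B0) : e.2 ∉ B0 :=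
  h.elim And.right And.right

theorem isBipMatching_starM0 {E : Set (V × V)} {S : Set V} (h : starM0 S ⊆ E) :
    IsBipMatching E (starM0 S) := by
  refine ⟨h, ?_⟩
  rintro ⟨a, a'⟩ ⟨ha, -⟩ ⟨b, b'⟩ ⟨hb, -⟩ h
  obtain rfl : a = a' := ha
  obtain rfl : b = b' := hb
  rcases h with rfl | rfl <;> rfl

def pathBlock (Q : Set (DiWalk V)) (v : V) : Set V :=
  insert v {u | ∃ q ∈ Q, v ∈ q.support ∧ u ∈ q.support}

theorem pathBlock_eq (hQ : PairwiseDisjointWalks Q) {q : DiWalk V} (hq : q ∈ Q) {v : V}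
    (hv : v ∈ q.support) : pathBlock Q v = q.support := by
  ext u
  refine ⟨?_, fun hu => Or.inr ⟨q, hq, hv, hu⟩⟩
  rintro (rfl | ⟨q', hq', hv', hu⟩)
  · exact hv
  · obtain rfl : q' = q := by
      by_contra hne
      exact disjoint_left.1 (hQ _ hq' _ hq hne) hv' hv
    exact hu

theorem IsLinkage.finite_pathBlock (hQ : IsLinkage D B0 Q) (v : V) : (pathBlock Q v).Finite := by
  by_cases hv : ∃ q ∈ Q, v ∈ q.support
  · obtain ⟨q, hq, hv⟩ := hv
    rw [pathBlock_eq hQ.1.2 hq hv]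
    exact support_finite (hQ.2 q hq).1
  · refine (finite_empty.subset ?_).insert v
    rintro u ⟨q, hq, hv', -⟩
    exact hv ⟨q, hq, hv'⟩

theorem IsLinkage.isBipMatching_swap_ESet (hDim : IsDimaze D B0) (hQ : IsLinkage D B0 Q) :
    IsBipMatching (starEdges D B0) (Prod.swap '' ESet Q) := by
  refine ⟨?_, ?_⟩
  · rintro _ ⟨⟨a, b⟩, h, rfl⟩
    exact Or.inr ⟨hQ.1.adj_of_mem_ESet h, fun ha => hDim a ha b (hQ.1.adj_of_mem_ESet h)⟩
  · rintro _ ⟨⟨a, b⟩, h, rfl⟩ _ ⟨⟨a', b'⟩, h', rfl⟩ (hb | ha)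
    · obtain rfl : b = b' := hb
      rw [hQ.1.eq_of_mem_ESet_right h h']
    · obtain rfl : a = a' := ha
      rw [hQ.1.eq_of_mem_ESet_left h h']

/-- Reversing the edges of a linkage and matching every vertex outside it to its own copy
gives an `m0`-matching of the converted bimaze. -/
theorem IsLinkage.exists_m0Matching (hDim : IsDimaze D B0) (hQ : IsLinkage D B0 Q) :
    ∃ m, IsM0Matching (starEdges D B0) (starM0 B0) m ∧ Prod.snd '' m = {v | v ∉ B0} ∧
      Prod.fst '' m = (VSet Q \ IniSet Q) ∪ (B0 ∪ VSet Q)ᶜ := by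
  have hfst : Prod.fst '' (Prod.swap '' ESet Q) = VSet Q \ IniSet Q := by
    rw [image_image]
    exact hQ.1.snd_image_ESet
  have hsnd : Prod.snd '' (Prod.swap '' ESet Q) = VSet Q \ B0 := by
    rw [image_image]
    exact hQ.fst_image_ESet hDim
  have hdisj : ∀ T, Disjoint (VSet Q \ T) (B0 ∪ VSet Q)ᶜ := fun T =>
    disjoint_compl_right_iff_subset.2 (sdiff_subset.trans subset_union_right)
  refine ⟨Prod.swap '' ESet Q ∪ starM0 (B0 ∪ VSet Q), ⟨(hQ.isBipMatching_swap_ESet hDim).union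
    (isBipMatching_starM0 ((starM0_anti subset_union_left).trans starM0_subset_starEdges))
    (by rw [hfst, fst_image_starM0]; exact hdisj _)
    (by rw [hsnd, snd_image_starM0]; exact hdisj _), ?_⟩, ?_, ?_⟩
  · refine finiteComponents_of_blocks (pathBlock Q) (fun v => mem_insert v _)
      hQ.finite_pathBlock ?_
    rintro e (he | ⟨⟨a, b⟩, h, rfl⟩ | he)
    · exact congrArg _ he.1
    · obtain ⟨q, hq, ha, hb⟩ := mem_support_of_mem_ESet h
      show pathBlock Q b = pathBlock Q a
      rw [pathBlock_eq hQ.1.2 hq ha, pathBlock_eq hQ.1.2 hq hb]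
    · exact congrArg _ he.1
  · rw [image_union, hsnd, snd_image_starM0]
    ext v
    simp only [mem_union, mem_sdiff, mem_compl_iff, mem_ofPred_eq]
    tauto
  · rw [image_union, hfst, fst_image_starM0]

section Partners

variable {E m : Set (V × V)}

open Classical in
/-- The left end of the edge of `m` at `y⋆`; junk value `y` if there is none. -/
noncomputable def leftPartner (m : Set (V × V)) (y : V) : V :=
  if h : ∃ x, (x, y) ∈ m then h.choose else y

open Classical in
/-- The right end `y` of the edge `x y⋆` of `m`; junk value `x` if there is none. -/
noncomputable def rightPartner (m : Set (V × V)) (x : V) : V :=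
  if h : ∃ y, (x, y) ∈ m then h.choose else x

theorem leftPartner_mem {y : V} (hy : y ∈ Prod.snd '' m) : (leftPartner m y, y) ∈ m := by
  have h : ∃ x, (x, y) ∈ m := by
    obtain ⟨⟨x, y⟩, hxy, rfl⟩ := hy
    exact ⟨x, hxy⟩
  rw [leftPartner, dif_pos h]
  exact h.choose_spec

theorem rightPartner_mem {x : V} (hx : x ∈ Prod.fst '' m) : (x, rightPartner m x) ∈ m := by
  have h : ∃ y, (x, y) ∈ m := by
    obtain ⟨⟨x, y⟩, hxy, rfl⟩ := hx
    exact ⟨y, hxy⟩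
  rw [rightPartner, dif_pos h]
  exact h.choose_spec

namespace IsBipMatching

theorem leftPartner_eq (hm : IsBipMatching E m) {x y : V} (h : (x, y) ∈ m) :
    leftPartner m y = x :=
  congrArg Prod.fst (hm.eq_of_snd_eq (leftPartner_mem ⟨_, h, rfl⟩) h rfl)

theorem rightPartner_eq (hm : IsBipMatching E m) {x y : V} (h : (x, y) ∈ m) :
    rightPartner m x = y :=
  congrArg Prod.snd (hm.eq_of_fst_eq (rightPartner_mem ⟨_, h, rfl⟩) h rfl)

theorem injOn_leftPartner (hm : IsBipMatching E m) : InjOn (leftPartner m) (Prod.snd '' m) :=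
  fun _ hy _ hy' h =>
    congrArg Prod.snd (hm.eq_of_fst_eq (leftPartner_mem hy) (leftPartner_mem hy') h)

theorem injOn_rightPartner (hm : IsBipMatching E m) : InjOn (rightPartner m) (Prod.fst '' m) :=
  fun _ hx _ hx' h =>
    congrArg Prod.fst (hm.eq_of_snd_eq (rightPartner_mem hx) (rightPartner_mem hx') h)

theorem leftPartner_image (hm : IsBipMatching E m) :
    leftPartner m '' (Prod.snd '' m) = Prod.fst '' m := by
  ext x
  constructor
  · rintro ⟨y, hy, rfl⟩
    exact ⟨_, leftPartner_mem hy, rfl⟩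
  · rintro ⟨⟨x, y⟩, h, rfl⟩
    exact ⟨y, ⟨_, h, rfl⟩, hm.leftPartner_eq h⟩

theorem rightPartner_image (hm : IsBipMatching E m) :
    rightPartner m '' (Prod.fst '' m) = Prod.snd '' m := by
  ext y
  constructor
  · rintro ⟨x, hx, rfl⟩
    exact ⟨_, rightPartner_mem hx, rfl⟩
  · rintro ⟨⟨x, y⟩, h, rfl⟩
    exact ⟨x, ⟨_, h, rfl⟩, hm.rightPartner_eq h⟩

theorem leftInvOn_partners (hm : IsBipMatching E m) :
    LeftInvOn (leftPartner m) (rightPartner m) (Prod.fst '' m) :=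
  fun _ hx => hm.leftPartner_eq (rightPartner_mem hx)

end IsBipMatching

end Partners

section OrbitWalk

variable {f g : V → V} {B T : Set V}

/-- The walk `a, f a, f (f a), …` stopped at its first vertex in `B`; it has length `0` if it
never meets `B`, as `sInf ∅ = 0`. -/
noncomputable def orbitWalk (f : V → V) (B : Set V) (a : V) : DiWalk V :=
  ⟨fun n => f^[n] a, (sInf {n | f^[n] a ∈ B} : ℕ)⟩

theorem orbitWalk_Ter (a : V) : (orbitWalk f B a).Ter = f^[sInf {n | f^[n] a ∈ B}] a := by
  simp [DiWalk.Ter, orbitWalk]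

theorem iterate_notMem_of_le_orbitWalk_len {a : V} {i : ℕ}
    (hi : (i : ℕ∞) ≤ (orbitWalk f B a).len) : ∀ k < i, f^[k] a ∉ B :=
  fun _ hk => Nat.notMem_of_lt_sInf (hk.trans_le ((Nat.cast_le (α := ℕ∞)).1 hi))

theorem Set.InjOn.orbitWalk_vtx_eq (hf : InjOn f Bᶜ) {a b : V} (ha : a ∉ f '' Bᶜ)
    (hb : b ∉ f '' Bᶜ) {i j : ℕ} (hi : (i : ℕ∞) ≤ (orbitWalk f B a).len)
    (hj : (j : ℕ∞) ≤ (orbitWalk f B b).len)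
    (h : (orbitWalk f B a).vtx i = (orbitWalk f B b).vtx j) : a = b ∧ i = j :=
  hf.iterate_eq_iterate ha hb (iterate_notMem_of_le_orbitWalk_len hi)
    (iterate_notMem_of_le_orbitWalk_len hj) h

theorem isPathIn_orbitWalk (hf : InjOn f Bᶜ) (hD : ∀ x ∉ B, f x = x ∨ D x (f x)) {a : V}
    (ha : a ∉ f '' Bᶜ) : (orbitWalk f B a).IsPathIn D := by
  refine ⟨fun i hi => ?_, fun i j hi hj h => (hf.orbitWalk_vtx_eq ha ha hi hj h).2⟩
  have hsucc : ((i + 1 : ℕ) : ℕ∞) ≤ (orbitWalk f B a).len := by exact_mod_cast hi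
  have hstep : f^[i + 1] a = f (f^[i] a) := Function.iterate_succ_apply' f i a
  show D (f^[i] a) (f^[i + 1] a)
  refine hstep ▸ (hD _ (iterate_notMem_of_le_orbitWalk_len hsucc i i.lt_succ_self)).resolve_left
    fun hfix => ?_
  have := (hf.orbitWalk_vtx_eq ha ha hsucc (le_self_add.trans hi) (hstep.trans hfix)).2
  omega

theorem isLinkage_orbitWalk (hf : InjOn f Bᶜ) (hD : ∀ x ∉ B, f x = x ∨ D x (f x)) {A : Set V}
    (hA : ∀ a ∈ A, a ∉ f '' Bᶜ) (hB : ∀ a ∈ A, ∃ n, f^[n] a ∈ B) :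
    IsLinkage D B (orbitWalk f B '' A) := by
  refine ⟨⟨?_, ?_⟩, ?_⟩
  · rintro _ ⟨a, ha, rfl⟩
    exact isPathIn_orbitWalk hf hD (hA a ha)
  · rintro _ ⟨a, ha, rfl⟩ _ ⟨b, hb, rfl⟩ hne
    refine disjoint_left.2 ?_
    rintro _ ⟨i, hi, rfl⟩ ⟨j, hj, h⟩
    exact hne (congrArg _ (hf.orbitWalk_vtx_eq (hA a ha) (hA b hb) hi hj h.symm).1)
  · rintro _ ⟨a, ha, rfl⟩
    refine ⟨ENat.natCast_ne_top _, ?_⟩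
    rw [orbitWalk_Ter]
    exact Nat.sInf_mem (hB a ha)

theorem Set.LeftInvOn.orbitWalk_Ter_iterate (hinv : LeftInvOn f g T) (hgB : ∀ x ∈ T, g x ∉ B)
    {b : V} (hb : b ∈ B) {l : ℕ} (hl : ∀ k < l, g^[k] b ∈ T) :
    (orbitWalk f B (g^[l] b)).Ter = b := by
  have hback := hinv.iterate_iterate hl
  have hend : f^[l] (g^[l] b) = b := by rw [hback l le_rfl, Nat.sub_self]; rfl
  have hbefore : ∀ k < l, f^[k] (g^[l] b) ∉ B := by
    intro k hk
    obtain ⟨n, hn⟩ : ∃ n, l - k = n + 1 := ⟨l - k - 1, by omega⟩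
    rw [hback k hk.le, hn, Function.iterate_succ_apply']
    exact hgB _ (hl n (by omega))
  have hmem : l ∈ {n | f^[n] (g^[l] b) ∈ B} := by rw [mem_ofPred_eq, hend]; exact hb
  have hhit : sInf {n | f^[n] (g^[l] b) ∈ B} = l :=
    le_antisymm (Nat.sInf_le hmem) (not_lt.1 fun hlt => hbefore _ hlt (Nat.sInf_mem ⟨l, hmem⟩))
  rw [orbitWalk_Ter, hhit, hend]

end OrbitWalk

section OntoMatching

variable {m : Set (V × V)}

theorem exists_iterate_leftPartner_mem (hm : IsM0Matching (starEdges D B0) (starM0 B0) m)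
    (honto : Prod.snd '' m = {v | v ∉ B0}) {a : V} (ha : a ∉ Prod.fst '' m) :
    ∃ n, (leftPartner m)^[n] a ∈ B0 := by
  have hS : Prod.snd '' m = B0ᶜ := honto
  have hstep : ∀ x ∈ B0ᶜ,
      ReflTransGen (bipStep (starM0 B0 ∪ m)) (.inl x) (.inl (leftPartner m x)) := fun x hx =>
    (ReflTransGen.single (bipStep_inl_inr (Or.inl ⟨rfl, hx⟩))).tail
      (bipStep_inr_inl (Or.inr (leftPartner_mem (hS ▸ hx))))
  obtain ⟨n, hn⟩ := hm.2.exists_iterate_notMem (hS ▸ hm.1.injOn_leftPartner) hstep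
    (by rwa [← hS, hm.1.leftPartner_image])
  exact ⟨n, not_not.1 hn⟩

theorem exists_orbitWalk_leftPartner_Ter_eq (hm : IsM0Matching (starEdges D B0) (starM0 B0) m)
    (honto : Prod.snd '' m = {v | v ∉ B0}) {b : V} (hb : b ∈ B0) :
    ∃ a ∉ Prod.fst '' m, (orbitWalk (leftPartner m) B0 a).Ter = b := by
  classical
  have hS : Prod.snd '' m = B0ᶜ := honto
  have hgB : ∀ x ∈ Prod.fst '' m, rightPartner m x ∉ B0 := fun x hx =>
    (hS ▸ mem_image_of_mem Prod.snd (rightPartner_mem hx) : rightPartner m x ∈ B0ᶜ)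
  have hstep : ∀ x ∈ Prod.fst '' m,
      ReflTransGen (bipStep (starM0 B0 ∪ m)) (.inl x) (.inl (rightPartner m x)) := fun x hx =>
    (ReflTransGen.single (bipStep_inl_inr (Or.inr (rightPartner_mem hx)))).tail
      (bipStep_inr_inl (Or.inl ⟨rfl, hgB x hx⟩))
  have hex : ∃ n, (rightPartner m)^[n] b ∉ Prod.fst '' m :=
    hm.2.exists_iterate_notMem hm.1.injOn_rightPartner hstep
      (by rw [hm.1.rightPartner_image, hS]; exact not_not.2 hb)
  exact ⟨_, Nat.find_spec hex, hm.1.leftInvOn_partners.orbitWalk_Ter_iterate hgB hb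
    fun k hk => not_not.1 (Nat.find_min hex hk)⟩

/-- The linkage follows the matching backwards, from `x` to the left end of the edge at `x⋆`,
until it reaches `B0`. -/
theorem linkableOnto_compl_fst_image (hm : IsM0Matching (starEdges D B0) (starM0 B0) m)
    (honto : Prod.snd '' m = {v | v ∉ B0}) : LinkableOnto D B0 (Prod.fst '' m)ᶜ := by
  have hS : Prod.snd '' m = B0ᶜ := honto
  have hD : ∀ x ∉ B0, leftPartner m x = x ∨ D x (leftPartner m x) := fun x hx =>
    (hm.1.1 (leftPartner_mem (hS ▸ hx : x ∈ Prod.snd '' m))).imp And.left And.left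
  have hQ := isLinkage_orbitWalk (A := (Prod.fst '' m)ᶜ) (hS ▸ hm.1.injOn_leftPartner) hD
    (fun a ha => (hS ▸ hm.1.leftPartner_image ▸ ha : a ∉ leftPartner m '' B0ᶜ))
    (fun a ha => exists_iterate_leftPartner_mem hm honto ha)
  refine ⟨_, hQ, by rw [IniSet, image_image]; exact image_id' _, hQ.TerSet_subset.antisymm ?_⟩
  intro b hb
  obtain ⟨a, ha, hab⟩ := exists_orbitWalk_leftPartner_Ter_eq hm honto hb
  exact ⟨_, ⟨a, ha, rfl⟩, ENat.natCast_ne_top _, hab⟩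

end OntoMatching

section Augmentation

variable {E m : Set (V × V)}

/-- The vertices `c` such that `c⋆` is reached from a right vertex `y⋆` not covered by `m` by
an alternating walk `y⋆, y, (m y)⋆, m y, …` of `m0`- and `m`-edges. -/
def alternatingReach (B0 : Set V) (m : Set (V × V)) : Set V :=
  {c | ∃ y ∉ B0, y ∉ Prod.snd '' m ∧ ReflTransGen (fun a b => (a, b) ∈ m) y c}

theorem alternatingReach_subset (hE : ∀ e ∈ E, e.2 ∉ B0) (hm : m ⊆ E) :
    alternatingReach B0 m ⊆ B0ᶜ := by
  rintro c ⟨y, hy, -, hyc⟩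
  rcases hyc.cases_tail with rfl | ⟨b, -, hbc⟩
  exacts [hy, hE _ (hm hbc)]

theorem mem_alternatingReach_of_notMem_snd {y : V} (hy : y ∉ B0) (hy' : y ∉ Prod.snd '' m) :
    y ∈ alternatingReach B0 m :=
  ⟨y, hy, hy', .refl⟩

theorem snd_mem_alternatingReach {x y : V} (h : (x, y) ∈ m) (hx : x ∈ alternatingReach B0 m) :
    y ∈ alternatingReach B0 m := by
  obtain ⟨y₀, hy₀, hy₀', hx⟩ := hx
  exact ⟨y₀, hy₀, hy₀', hx.tail h⟩

theorem IsBipMatching.fst_mem_alternatingReach (hm : IsBipMatching E m) {x y : V}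
    (h : (x, y) ∈ m) (hy : y ∈ alternatingReach B0 m) : x ∈ alternatingReach B0 m := by
  obtain ⟨y₀, hy₀, hy₀', hy⟩ := hy
  rcases hy.cases_tail with rfl | ⟨c, hc, hcy⟩
  · exact absurd ⟨_, h, rfl⟩ hy₀'
  · obtain rfl : c = x := congrArg Prod.fst (hm.eq_of_snd_eq hcy h rfl)
    exact ⟨y₀, hy₀, hy₀', hc⟩

/-- `m'` switches `m` to `m0` on the alternating walks that start at right vertices missed
by `m`. -/
theorem exists_onto_superset (hE0 : starM0 B0 ⊆ E) (hE : ∀ e ∈ E, e.2 ∉ B0)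
    (hm : IsM0Matching E (starM0 B0) m) :
    ∃ m', IsM0Matching E (starM0 B0) m' ∧ Prod.snd '' m' = {v | v ∉ B0} ∧
      Prod.fst '' m ⊆ Prod.fst '' m' := by
  set C := alternatingReach B0 m
  have hCB : C ⊆ B0ᶜ := alternatingReach_subset hE hm.1.1
  have hdiag : starM0 Cᶜ ⊆ starM0 B0 := starM0_anti (subset_compl_comm.1 hCB)
  have hfstC : Prod.fst '' starM0 Cᶜ = C := (fst_image_starM0 _).trans (compl_compl C)
  have hsndC : Prod.snd '' starM0 Cᶜ = C := (snd_image_starM0 _).trans (compl_compl C)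
  refine ⟨{e ∈ m | e.1 ∉ C} ∪ starM0 Cᶜ, ⟨(hm.1.subset (sep_subset m _)).union
    (isBipMatching_starM0 (hdiag.trans hE0)) ?_ ?_, hm.2.mono ?_⟩, ?_, ?_⟩
  · rw [hfstC]
    exact disjoint_left.2 fun _ ⟨_, he, hx⟩ => hx ▸ he.2
  · rw [hsndC]
    exact disjoint_left.2 fun _ ⟨e, he, hy⟩ hyC =>
      he.2 (hm.1.fst_mem_alternatingReach he.1 (hy ▸ hyC))
  · exact union_subset subset_union_left
      (union_subset ((sep_subset m _).trans subset_union_right) (hdiag.trans subset_union_left))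
  · ext y
    refine ⟨?_, fun hy => ?_⟩
    · rintro ⟨e, he | he, rfl⟩
      exacts [hE e (hm.1.1 he.1), hCB (hsndC ▸ mem_image_of_mem Prod.snd he)]
    by_cases hyC : y ∈ C
    · exact ⟨(y, y), Or.inr ⟨rfl, not_not.2 hyC⟩, rfl⟩
    obtain ⟨⟨x, y⟩, h, rfl⟩ : y ∈ Prod.snd '' m := by
      by_contra hy'
      exact hyC (mem_alternatingReach_of_notMem_snd hy hy')
    exact ⟨(x, y), Or.inl ⟨h, fun hx => hyC (snd_mem_alternatingReach h hx)⟩, rfl⟩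
  · rintro _ ⟨⟨x, y⟩, h, rfl⟩
    by_cases hx : x ∈ C
    · exact ⟨(x, x), Or.inr ⟨rfl, not_not.2 hx⟩, rfl⟩
    · exact ⟨(x, y), Or.inl ⟨h, hx⟩, rfl⟩

end Augmentation

theorem dDaggerProp_iff_isAntichain {E : Set (V × V)} (hE0 : starM0 B0 ⊆ E)
    (hE : ∀ e ∈ E, e.2 ∉ B0) :
    DDaggerProp E (starM0 B0) {v | v ∉ B0} ↔
      IsAntichain (· ≤ ·) {I | M0MatchableOnto E (starM0 B0) I {v | v ∉ B0}} :=
  forall_maximal_iff_iff_isAntichain (fun _ ⟨m, hm, hI, _⟩ => ⟨m, hm, hI⟩) fun _ ⟨_, hm, hI⟩ =>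
    let ⟨m', hm', honto, hsub⟩ := exists_onto_superset hE0 hE hm
    ⟨_, ⟨m', hm', rfl, honto⟩, hI ▸ hsub⟩

theorem exists_linkableOnto_superset (hDim : IsDimaze D B0) {I : Set V}
    (hI : Linkable D B0 I) : ∃ J, LinkableOnto D B0 J ∧ I ⊆ J := by
  obtain ⟨Q, hQ, rfl⟩ := hI
  obtain ⟨m, hm, honto, hfst⟩ := hQ.exists_m0Matching hDim
  refine ⟨_, linkableOnto_compl_fst_image hm honto, fun x hx => ?_⟩
  rw [hfst]
  have := IniSet_subset_VSet hx
  simp only [mem_compl_iff, mem_union, mem_sdiff]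
  tauto

theorem daggerProp_iff_isAntichain (hDim : IsDimaze D B0) :
    DaggerProp D B0 ↔ IsAntichain (· ≤ ·) {I | LinkableOnto D B0 I} :=
  forall_maximal_iff_iff_isAntichain (fun _ ⟨Q, hQ, hI, _⟩ => ⟨Q, hQ, hI⟩) fun _ hI =>
    exists_linkableOnto_superset hDim hI

theorem linkableOnto_iff_m0MatchableOnto_compl (hDim : IsDimaze D B0) {I : Set V} :
    LinkableOnto D B0 I ↔ M0MatchableOnto (starEdges D B0) (starM0 B0) Iᶜ {v | v ∉ B0} := by
  constructor
  · rintro ⟨Q, hQ, rfl, hT⟩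
    obtain ⟨m, hm, honto, hfst⟩ := hQ.exists_m0Matching hDim
    refine ⟨m, hm, ?_, honto⟩
    rw [hfst, union_eq_right.2 (hT ▸ TerSet_subset_VSet : B0 ⊆ VSet Q)]
    ext x
    have := @IniSet_subset_VSet _ Q x
    simp only [mem_compl_iff, mem_union, mem_sdiff]
    tauto
  · rintro ⟨m, hm, hI, honto⟩
    simpa [hI] using linkableOnto_compl_fst_image hm honto

theorem dagger_iff_ddagger {V : Type*} (D : V → V → Prop) (B0 : Set V)
    (hDim : IsDimaze D B0) :
    DaggerProp D B0 ↔ DDaggerProp (starEdges D B0) (starM0 B0) {v | v ∉ B0} := by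
  have hsets : {I | LinkableOnto D B0 I} =
      compl ⁻¹' {J | M0MatchableOnto (starEdges D B0) (starM0 B0) J {v | v ∉ B0}} :=
    ext fun _ => linkableOnto_iff_m0MatchableOnto_compl hDim
  rw [daggerProp_iff_isAntichain hDim, hsets,
    dDaggerProp_iff_isAntichain starM0_subset_starEdges fun _ => snd_notMem_of_mem_starEdges]
  exact ⟨fun h => by simpa using h.preimage_compl, IsAntichain.preimage_compl⟩
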